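/- Let κ be an uncountable regular cardinal with κ^{<κ}=κ. Every κ-σ-set A ⊆ 2^κ is perfectly κ-meagre. -/

import Mathlib

noncomputable section

open Cardinal Set

namespace GenSp

/-- The index set: a canonical type of order type `κ.ord`. -/
abbrev I (κ : Cardinal.{0}) : Type := κ.ord.ToType

variable (κ : Cardinal.{0}) (A : Type)

/-- The generalized space `A^κ`. -/
abbrev Sp : Type := I κ → A

/-- The basic clopen set `[x ↾ ξ]`: all functions agreeing with `x` below `ξ`. -/
def cyl (x : Sp κ A) (ξ : I κ) : Set (Sp κ A) := {y | ∀ β < ξ, y β = x β}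

/-- The bounded topology on `A^κ`, generated by the basic clopen sets. -/
def bt : TopologicalSpace (Sp κ A) :=
  .generateFrom {S | ∃ x ξ, S = cyl κ A x ξ}

/-- Open in the bounded topology. -/
def OpenK (s : Set (Sp κ A)) : Prop := @IsOpen _ (bt κ A) s

/-- Closed in the bounded topology. -/
def ClosedK (s : Set (Sp κ A)) : Prop := @IsClosed _ (bt κ A) s

/-- Nowhere dense in the bounded topology. -/
def NwdK (s : Set (Sp κ A)) : Prop := @IsNowhereDense _ (bt κ A) s

/-- κ-meagre: a union of (at most) κ nowhere dense sets. -/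
def MeagreK (s : Set (Sp κ A)) : Prop :=
  ∃ f : I κ → Set (Sp κ A), (∀ i, NwdK κ A (f i)) ∧ s = ⋃ i, f i

/-- κ-strongly null set. -/
def SNullK (S : Set (Sp κ A)) : Prop :=
  ∀ ξ : I κ → I κ, ∃ a : I κ → Sp κ A, S ⊆ ⋃ α, cyl κ A (a α) (ξ α)

/-- Coordinatewise addition over `ℤ₂` (translation by `x`). -/
def xadd (x y : Sp κ Bool) : Sp κ Bool := fun i => xor (x i) (y i)

/-- The covering number of the κ-meagre ideal. -/
def covM : Cardinal :=
  sInf {c | ∃ 𝒜 : Set (Set (Sp κ A)), #𝒜 = c ∧ (∀ s ∈ 𝒜, MeagreK κ A s) ∧ ⋃₀ 𝒜 = Set.univ}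

/-- The cofinality of the κ-meagre ideal. -/
def cofM : Cardinal :=
  sInf {c | ∃ 𝒜 : Set (Set (Sp κ A)), #𝒜 = c ∧ (∀ s ∈ 𝒜, MeagreK κ A s) ∧
    ∀ t, MeagreK κ A t → ∃ s ∈ 𝒜, t ⊆ s}

/-- κ is weakly compact: uncountable and with the partition property κ → (κ)²₂. -/
def IsWeaklyCompact (κ : Cardinal.{0}) : Prop :=
  ℵ₀ < κ ∧ ∀ c : I κ → I κ → Bool, ∃ H : Set (I κ), #H = κ ∧
    ∃ b : Bool, ∀ i ∈ H, ∀ j ∈ H, i < j → c i j = b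

/-- `S` is κ-meagre relative to `P` (in the subspace topology). -/
def MeagreInK (P S : Set (Sp κ A)) : Prop :=
  ∃ f : I κ → Set P,
    (∀ i, @IsNowhereDense _ (TopologicalSpace.induced Subtype.val (bt κ A)) (f i)) ∧
    {x : P | (x : Sp κ A) ∈ S} = ⋃ i, f i

/-- Perfect set in the bounded topology. -/
def PerfK (P : Set (Sp κ A)) : Prop := @Perfect _ (bt κ A) P

/-- Perfectly κ-meagre set. -/
def PMeagreK (S : Set (Sp κ A)) : Prop := ∀ P, PerfK κ A P → MeagreInK κ A P S

/-- κ-λ-set. -/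
def KLambdaSet (S : Set (Sp κ A)) : Prop :=
  ∀ B ⊆ S, #B ≤ κ → ∃ G : I κ → Set (Sp κ A),
    (∀ i, OpenK κ A (G i)) ∧ (⋂ i, G i) ∩ S = B

/-- κ-σ-set. -/
def KSigmaSet (S : Set (Sp κ A)) : Prop :=
  ∀ F : I κ → Set (Sp κ A), (∀ i, ClosedK κ A (F i)) →
    ∃ G : I κ → Set (Sp κ A), (∀ i, OpenK κ A (G i)) ∧
      S ∩ (⋃ i, F i) = S ∩ (⋂ i, G i)

/-- κ-γ-set: every open (proper) κ-cover contains a κ-γ-subcover of size κ. -/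
def KGammaSet (X : Set (Sp κ A)) : Prop :=
  ∀ 𝒰 : Set (Set (Sp κ A)), (∀ U ∈ 𝒰, OpenK κ A U) → X ∉ 𝒰 →
    (∀ C ⊆ X, #C < κ → ∃ U ∈ 𝒰, C ⊆ U) →
    ∃ U : I κ → Set (Sp κ A), (∀ α, U α ∈ 𝒰) ∧
      X ⊆ ⋃ α, ⋂ β, ⋂ (_ : α < β), U β

/-- A (proper) open cover of `X` of size κ, indexed by `I κ`. -/
def IsOCovSeq (X : Set (Sp κ A)) (U : I κ → Set (Sp κ A)) : Prop :=
  (∀ α, OpenK κ A (U α)) ∧ (∀ α, U α ≠ X) ∧ X ⊆ ⋃ α, U α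

/-- A (proper) κ-γ-cover of `X`, indexed by `I κ`. -/
def IsGammaCovSeq (X : Set (Sp κ A)) (U : I κ → Set (Sp κ A)) : Prop :=
  (∀ α, OpenK κ A (U α)) ∧ (∀ α, U α ≠ X) ∧
    X ⊆ ⋃ α, ⋂ β, ⋂ (_ : α < β), U β

/-- The cover `U` is essentially of size κ: no subfamily of size `< κ` covers `X`. -/
def EssK (X : Set (Sp κ A)) (U : I κ → Set (Sp κ A)) : Prop :=
  ∀ s : Set (I κ), #s < κ → ¬ X ⊆ ⋃ β ∈ s, U β

/-- The selection principle `S₁^κ(Γ_κ, Γ_κ)`. -/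
def S1GammaGamma (X : Set (Sp κ A)) : Prop :=
  ∀ 𝒰 : I κ → I κ → Set (Sp κ A), (∀ α, IsGammaCovSeq κ A X (𝒰 α)) →
    ∃ f : I κ → I κ, IsGammaCovSeq κ A X (fun α => 𝒰 α (f α))

/-- The κ-Hurewicz property `U^κ_{<κ}(O_κ, Γ_κ)`. -/
def KHurewicz (X : Set (Sp κ A)) : Prop :=
  ∀ 𝒰 : I κ → I κ → Set (Sp κ A), (∀ α, IsOCovSeq κ A X (𝒰 α)) →
    (∀ α, EssK κ A X (𝒰 α)) →
    ∃ V : I κ → Set (I κ), (∀ α, #(V α) < κ) ∧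
      IsGammaCovSeq κ A X (fun α => ⋃ β ∈ V α, 𝒰 α β)

/-- The κ-Menger property `U^κ_{<κ}(O_κ, O_κ)`. -/
def KMenger (X : Set (Sp κ A)) : Prop :=
  ∀ 𝒰 : I κ → I κ → Set (Sp κ A), (∀ α, IsOCovSeq κ A X (𝒰 α)) →
    (∀ α, EssK κ A X (𝒰 α)) →
    ∃ V : I κ → Set (I κ), (∀ α, #(V α) < κ) ∧
      IsOCovSeq κ A X (fun α => ⋃ β ∈ V α, 𝒰 α β)

/-- The κ-Rothberger property `S₁^κ(O_κ, O_κ)`. -/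
def KRothberger (X : Set (Sp κ A)) : Prop :=
  ∀ 𝒰 : I κ → I κ → Set (Sp κ A), (∀ α, IsOCovSeq κ A X (𝒰 α)) →
    ∃ f : I κ → I κ, IsOCovSeq κ A X (fun α => 𝒰 α (f α))

/-- Closed unbounded subset of `I κ`. -/
def IsClubK (S : Set (I κ)) : Prop :=
  (∀ a : I κ, ∃ b ∈ S, a < b) ∧
  (∀ a : I κ, (∃ b, b < a) → (∀ b < a, ∃ c ∈ S, b < c ∧ c < a) → a ∈ S)

/-- Stationary subset of `I κ`. -/
def IsStatK (S : Set (I κ)) : Prop :=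
  ∀ C : Set (I κ), IsClubK κ C → (S ∩ C).Nonempty

/-- The diamond principle `◇_κ(E)`. -/
def DiamondK (E : Set (I κ)) : Prop :=
  ∃ s : I κ → Set (I κ), (∀ α, s α ⊆ Iio α) ∧
    ∀ X : Set (I κ), IsStatK κ {α | α ∈ E ∧ X ∩ Iio α = s α}

/-- The guessing principle `◇_κ(E, 2^κ, NS_κ)`. -/
def DiamondFunK (E : Set (I κ)) : Prop :=
  ∃ s : I κ → Sp κ Bool,
    ∀ x : Sp κ Bool, IsStatK κ {α | α ∈ E ∧ ∀ β < α, x β = s α β}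

/-- `S` is `X`-small. -/
def XSmall (X : Set (I κ)) (S : Set (Sp κ A)) : Prop :=
  ∃ a : I κ → Sp κ A, S ⊆ ⋃ α ∈ X, cyl κ A (a α) α

/-- `S` is small in `A^κ`. -/
def SmallK (S : Set (Sp κ A)) : Prop :=
  ∃ lam : Cardinal, lam < κ ∧ ∀ α : I κ, ∃ T : Set (Sp κ A),
    #T ≤ lam ∧ S ⊆ ⋃ x ∈ T, cyl κ A x α

end GenSp

/-!
Inside a perfect set `P`, choose `D ⊆ S ∩ P` dense in `S ∩ P` with `|D| ≤ κ`: this is possible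
because `κ^{<κ} = κ` gives `2^κ` a base of `κ` cylinders. The points of `D` are `κ` closed sets,
so the σ-set property yields open `G_α` with `S ∩ D = S ∩ ⋂ G_α`, and `S ∩ P` is covered by the
points of `D` and the sets `(S ∩ P) \ G_α`. Points are nowhere dense in `P` since `P` has no
isolated points. An open set inside the closure of `(S ∩ P) \ G_α` misses `G_α ⊇ D`, yet lies in
the closure of `D`, so it is empty.
-/

section NowhereDense

variable {X : Type*} [TopologicalSpace X]

theorem IsNowhereDense.union {s t : Set X} (hs : IsNowhereDense s) (ht : IsNowhereDense t) :
    IsNowhereDense (s ∪ t) := by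
  rw [IsNowhereDense, closure_union,
    interior_union_isClosed_of_interior_empty isClosed_closure ht, hs]

theorem Set.Subsingleton.isNowhereDense [T1Space X] [PerfectSpace X] {s : Set X}
    (hs : s.Subsingleton) : IsNowhereDense s := by
  rcases hs.eq_empty_or_singleton with rfl | ⟨x, rfl⟩
  · exact isNowhereDense_empty
  · rw [isClosed_singleton.isNowhereDense_iff, interior_singleton]

theorem Preperfect.perfectSpace {C : Set X} (hC : Preperfect C) : PerfectSpace C := by
  refine ⟨preperfect_iff_nhds.2 fun x _ U hU => ?_⟩
  obtain ⟨V, hV, hVU⟩ := Filter.mem_comap.1 (nhds_subtype C x ▸ hU)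
  obtain ⟨y, ⟨hyV, hyC⟩, hyx⟩ := preperfect_iff_nhds.1 hC x x.2 V hV
  exact ⟨⟨y, hyC⟩, ⟨hVU hyV, trivial⟩, fun h => hyx (congrArg Subtype.val h)⟩

theorem isNowhereDense_diff_of_subset_closure {D Y G : Set X} (hY : Y ⊆ closure D)
    (hG : IsOpen G) (hDG : D ⊆ G) : IsNowhereDense (Y \ G) := by
  have hsub : interior (closure (Y \ G)) ⊆ closure D :=
    interior_subset.trans (closure_minimal (sdiff_subset.trans hY) isClosed_closure)
  have hdisj : Disjoint (interior (closure (Y \ G))) D := by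
    refine Disjoint.mono_right hDG (subset_compl_iff_disjoint_right.1 ?_)
    exact interior_subset.trans (closure_minimal (fun x hx => hx.2) hG.isClosed_compl)
  exact (hdisj.closure_right isOpen_interior).eq_bot_of_le hsub

theorem exists_iUnion_isNowhereDense_eq_of_inter_iUnion_eq_inter_iInter {ι : Type*}
    {Y : Set X} {F G : ι → Set X} (hF : ∀ i, IsNowhereDense (F i)) (hG : ∀ i, IsOpen (G i))
    (hFG : Y ∩ ⋃ i, F i = Y ∩ ⋂ i, G i) (hY : Y ⊆ closure (Y ∩ ⋃ i, F i)) :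
    ∃ f : ι → Set X, (∀ i, IsNowhereDense (f i)) ∧ Y = ⋃ i, f i := by
  refine ⟨fun i => Y ∩ F i ∪ Y \ G i, fun i => ((hF i).mono inter_subset_right).union
    (isNowhereDense_diff_of_subset_closure hY (hG i) ?_), ?_⟩
  · rw [hFG]
    exact inter_subset_right.trans (iInter_subset G i)
  · refine Subset.antisymm (fun x hx => ?_)
      (iUnion_subset fun i => union_subset inter_subset_left sdiff_subset)
    by_cases hxG : x ∈ ⋂ i, G i
    · obtain ⟨i, hi⟩ := mem_iUnion.1 (hFG ▸ ⟨hx, hxG⟩ : x ∈ Y ∩ ⋃ i, F i).2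
      exact mem_iUnion.2 ⟨i, Or.inl ⟨hx, hi⟩⟩
    · obtain ⟨i, hi⟩ := by simpa only [mem_iInter, not_forall] using hxG
      exact mem_iUnion.2 ⟨i, Or.inr ⟨hx, hi⟩⟩

theorem TopologicalSpace.IsTopologicalBasis.exists_subset_mk_le_subset_closure {b : Set (Set X)}
    (hb : IsTopologicalBasis b) (s : Set X) : ∃ t ⊆ s, #t ≤ #b ∧ s ⊆ closure t := by
  have hpick : ∀ o : {o // o ∈ b ∧ (o ∩ s).Nonempty}, ∃ x, x ∈ o.1 ∩ s := fun o => o.2.2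
  choose pick hpick using hpick
  refine ⟨range pick, range_subset_iff.2 fun o => (hpick o).2, mk_range_le.trans ?_, ?_⟩
  · exact mk_subtype_le_of_subset fun o ho => ho.1
  · intro x hx
    rw [hb.mem_closure_iff]
    intro o ho hxo
    exact ⟨pick ⟨o, ho, x, hxo, hx⟩, (hpick ⟨o, ho, x, hxo, hx⟩).1, mem_range_self _⟩

theorem Set.subset_closure_preimage_val {P s t : Set X} (hst : s ⊆ closure t) (htP : t ⊆ P) :
    ((↑) : P → X) ⁻¹' s ⊆ closure (((↑) : P → X) ⁻¹' t) := by
  intro x hx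
  rw [closure_subtype, Subtype.image_preimage_coe, inter_eq_right.2 htP]
  exact hst hx

end NowhereDense

universe u in
theorem Set.exists_subsingleton_iUnion_eq_of_mk_le {α ι : Type u} {D : Set α} (h : #D ≤ #ι) :
    ∃ F : ι → Set α, (∀ i, (F i).Subsingleton) ∧ ⋃ i, F i = D := by
  obtain ⟨e⟩ := h
  refine ⟨fun i => Subtype.val '' (e ⁻¹' {i}), fun i => ?_, ?_⟩
  · rintro _ ⟨a, ha, rfl⟩ _ ⟨b, hb, rfl⟩
    exact congrArg Subtype.val (e.injective (ha.trans hb.symm))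
  · rw [← image_iUnion, ← preimage_iUnion, iUnion_of_singleton, preimage_univ, image_univ,
      Subtype.range_coe]

namespace GenSp

section Cylinders

variable {κ : Cardinal.{0}} {A : Type}

def cyls (κ : Cardinal.{0}) (A : Type) : Set (Set (Sp κ A)) := {S | ∃ x ξ, S = cyl κ A x ξ}

theorem nonempty_I (hκ : ℵ₀ ≤ κ) : Nonempty (I κ) := by
  rw [← Cardinal.mk_ne_zero_iff, Cardinal.mk_ord_toType]
  exact (aleph0_pos.trans_le hκ).ne'

theorem noMaxOrder_I (hκ : ℵ₀ ≤ κ) : NoMaxOrder (I κ) :=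
  Ordinal.isSuccPrelimit_type_lt_iff.1 <| by
    rw [Ordinal.type_toType]
    exact (Cardinal.isSuccLimit_ord hκ).isSuccPrelimit

theorem mem_cyl_self (x : Sp κ A) (ξ : I κ) : x ∈ cyl κ A x ξ := fun _ _ => rfl

theorem isTopologicalBasis_cyls [Nonempty (I κ)] :
    @TopologicalSpace.IsTopologicalBasis _ (bt κ A) (cyls κ A) := by
  let _ := bt κ A
  refine ⟨?_, ?_, rfl⟩
  · rintro _ ⟨y, ξ, rfl⟩ _ ⟨z, ζ, rfl⟩ x ⟨hxy, hxz⟩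
    refine ⟨cyl κ A x (max ξ ζ), ⟨x, _, rfl⟩, mem_cyl_self x _, fun w hw => ⟨?_, ?_⟩⟩
    · exact fun β hβ => (hw β (hβ.trans_le (le_max_left _ _))).trans (hxy β hβ)
    · exact fun β hβ => (hw β (hβ.trans_le (le_max_right _ _))).trans (hxz β hβ)
  · exact eq_univ_of_forall fun x => ⟨_, ⟨x, Classical.arbitrary _, rfl⟩, mem_cyl_self x _⟩

theorem t1Space_bt [NoMaxOrder (I κ)] : @T1Space _ (bt κ A) := by
  let _ := bt κ A
  refine ⟨fun y => ?_⟩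
  rw [← isOpen_compl_iff, isOpen_iff_forall_mem_open]
  intro z hz
  obtain ⟨β, hβ⟩ := Function.ne_iff.mp hz
  obtain ⟨ξ, hξ⟩ := exists_gt β
  refine ⟨cyl κ A z ξ, fun w hw hwy => hβ ?_, .basic _ ⟨z, ξ, rfl⟩, mem_cyl_self z ξ⟩
  rw [← hw β hξ, hwy]

theorem mk_cyls_le (hκ : ℵ₀ ≤ κ) (hA : #A ≤ κ) (hpow : κ ^< κ = κ) : #(cyls κ A) ≤ κ := by
  let restr : (Σ ξ : I κ, (Iio ξ → A)) → Set (Sp κ A) := fun p => {y | ∀ β : Iio p.1, y β = p.2 β}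
  have hcyls : cyls κ A ⊆ range restr := by
    rintro _ ⟨x, ξ, rfl⟩
    exact ⟨⟨ξ, fun β => x β⟩, ext fun y => ⟨fun h β hβ => h ⟨β, hβ⟩, fun h β => h β β.2⟩⟩
  have hpiece (ξ : I κ) : #A ^ #(Iio ξ) ≤ κ :=
    (power_le_power_right hA).trans <| (le_powerlt κ (by simpa using mk_Iio_lt ξ)).trans hpow.le
  calc #(cyls κ A) ≤ #(Σ ξ : I κ, (Iio ξ → A)) := (mk_le_mk_of_subset hcyls).trans mk_range_le
    _ ≤ sum fun _ : I κ => κ := by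
      rw [mk_sigma]
      exact sum_le_sum _ _ fun ξ => by simpa only [power_def] using hpiece ξ
    _ = κ := by rw [sum_const', mk_ord_toType, mul_eq_self hκ]

end Cylinders

theorem stmt11_general (κ : Cardinal.{0}) (hk : Cardinal.aleph0 < κ) (hpow : κ ^< κ = κ)
    (S : Set (Sp κ Bool)) (hS : KSigmaSet κ Bool S) :
    PMeagreK κ Bool S := by
  intro P hP
  let _ := bt κ Bool
  have := nonempty_I hk.le
  have := noMaxOrder_I hk.le
  have := t1Space_bt (κ := κ) (A := Bool)
  have : PerfectSpace P := hP.acc.perfectSpace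
  obtain ⟨D, hDSP, hDcard, hSPD⟩ :=
    isTopologicalBasis_cyls.exists_subset_mk_le_subset_closure (S ∩ P)
  have hDκ : #D ≤ #(I κ) := by
    rw [mk_ord_toType]
    exact hDcard.trans (mk_cyls_le hk.le ((lt_aleph0_of_finite Bool).le.trans hk.le) hpow)
  obtain ⟨F, hF, rfl⟩ := exists_subsingleton_iUnion_eq_of_mk_le hDκ
  obtain ⟨G, hG, hSFG⟩ := hS F fun α => (hF α).isClosed
  refine exists_iUnion_isNowhereDense_eq_of_inter_iUnion_eq_inter_iInter
    (Y := Subtype.val ⁻¹' S) (F := fun α => Subtype.val ⁻¹' F α)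
    (G := fun α => Subtype.val ⁻¹' G α)
    (fun α => ((hF α).preimage Subtype.val_injective).isNowhereDense)
    (fun α => (hG α).preimage continuous_subtype_val) ?_ ?_
  · simpa only [preimage_iUnion, preimage_iInter, preimage_inter]
      using congrArg (preimage Subtype.val) hSFG
  · rw [← preimage_iUnion, ← preimage_inter, inter_eq_right.2 (hDSP.trans inter_subset_left)]
    exact fun x hx => subset_closure_preimage_val hSPD (hDSP.trans inter_subset_right) ⟨hx, x.2⟩

theorem stmt11 (κ : Cardinal.{0}) (hk : Cardinal.aleph0 < κ) (hreg : κ.IsRegular) (hpow : κ ^< κ = κ)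
    (S : Set (Sp κ Bool)) (hS : KSigmaSet κ Bool S) :
    PMeagreK κ Bool S :=
  stmt11_general κ hk hpow S hS

end GenSp
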